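/- Let (X,F,C) and (X',F',C') be Frölicher spaces, with induced diffeologies P(F) and P(F') (plots are parametrizations u with f∘u smooth for all f in the function set). A map φ : X → X' is smooth in the Frölicher sense (f'∘φ∘c ∈ C^∞(ℝ,ℝ) for all f' ∈ F', c ∈ C) if and only if φ is smooth for the induced diffeologies (φ composed with every plot of P(F) is a plot of P(F')). -/
import Mathlib


/-- A Frölicher space: a set of curves and a set of functions, each determined
by smoothness of compositions along the other. -/
structure Frolicher (X : Type*) where
  curves : Set (ℝ → X)
  funcs : Set (X → ℝ)
  mem_curves_iff : ∀ c : ℝ → X, c ∈ curves ↔ ∀ f ∈ funcs, ContDiff ℝ (⊤ : ℕ∞) (f ∘ c)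
  mem_funcs_iff : ∀ f : X → ℝ, f ∈ funcs ↔ ∀ c ∈ curves, ContDiff ℝ (⊤ : ℕ∞) (f ∘ c)

/-- A map between Frölicher spaces is Frölicher-smooth iff it is smooth for the
induced diffeologies (plots are parametrizations along which all structure
functions are smooth). -/
theorem frolicher_smooth_iff_diffeological_smooth {X X' : Type*}
    (S : Frolicher X) (S' : Frolicher X') (φ : X → X') :
    (∀ f' ∈ S'.funcs, ∀ c ∈ S.curves, ContDiff ℝ (⊤ : ℕ∞) (f' ∘ φ ∘ c)) ↔
    (∀ (n : ℕ) (O : Set (Fin n → ℝ)) (u : (Fin n → ℝ) → X), IsOpen O →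
      (∀ f ∈ S.funcs, ContDiffOn ℝ (⊤ : ℕ∞) (f ∘ u) O) →
      ∀ f' ∈ S'.funcs, ContDiffOn ℝ (⊤ : ℕ∞) (f' ∘ φ ∘ u) O) := by
  constructor
  · intro h n O u _hO hu f' hf'
    -- f' ∘ φ is a structure function on X
    have hmem : (fun x => f' (φ x)) ∈ S.funcs := by
      rw [S.mem_funcs_iff]
      intro c hc
      exact h f' hf' c hc
    exact hu _ hmem
  · intro h f' hf' c hc
    -- view c as a 1-dimensional plot
    set u : (Fin 1 → ℝ) → X := fun v => c (v 0) with hu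
    have hproj : ContDiff ℝ (⊤ : ℕ∞) (fun v : Fin 1 → ℝ => v 0) :=
      (ContinuousLinearMap.proj (R := ℝ) (φ := fun _ : Fin 1 => ℝ) 0).contDiff
    have hplot : ∀ f ∈ S.funcs, ContDiffOn ℝ (⊤ : ℕ∞) (f ∘ u) Set.univ := by
      intro f hf
      have hfc : ContDiff ℝ (⊤ : ℕ∞) (f ∘ c) := (S.mem_curves_iff c).1 hc f hf
      exact (hfc.comp hproj).contDiffOn
    have key := h 1 Set.univ u isOpen_univ hplot f' hf'
    have key' : ContDiff ℝ (⊤ : ℕ∞) (f' ∘ φ ∘ u) := by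
      rwa [contDiffOn_univ] at key
    have hemb : ContDiff ℝ (⊤ : ℕ∞) (fun t : ℝ => (fun _ : Fin 1 => t)) :=
      contDiff_pi.2 fun _ => contDiff_id
    have : ContDiff ℝ (⊤ : ℕ∞) ((f' ∘ φ ∘ u) ∘ fun t : ℝ => (fun _ : Fin 1 => t)) :=
      key'.comp hemb
    exact this
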